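/- Let E be a compact Polish space and S a Polish space, and let Φ be a map from Borel probability measures on E to Borel probability measures on S that is continuous with respect to the weak topologies and injective. Then for any sequences {μ_n}, {ν_n} of Borel probability measures on E, ‖Φ(μ_n) − Φ(ν_n)‖_TV → 0 as n → ∞ implies ‖μ_n − ν_n‖_BL → 0 as n → ∞. -/

import Mathlib

/-!
By compactness of the space of probability measures on `E`, every subsequence of `(μₙ, νₙ)` has a
further subsequence converging weakly to some `(a, b)`. Total variation dominates the difference of
the integrals of any bounded continuous function, so `Φ μₙ` and `Φ νₙ` have the same weak limit
along it: `Φ a = Φ b`, hence `a = b` by injectivity. Finally `‖·‖_BL` is weakly continuous when `E`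
is compact: by Arzelà–Ascoli the 1-Lipschitz functions bounded by 1 form a compact set in the sup
norm, on which `(μ, ν, f) ↦ |∫ f dμ - ∫ f dν|` is jointly continuous. So along the subsequence
`‖μₙ - νₙ‖_BL → ‖a - a‖_BL = 0`.
-/

open MeasureTheory Filter Set BoundedContinuousFunction
open scoped NNReal Topology

lemma Real.biSup_eq_sSup_image {α : Type*} {s : Set α} {v : α → ℝ} (hv : ∀ a, 0 ≤ v a) :
    ⨆ a ∈ s, v a = sSup (v '' s) := by
  by_cases hb : BddAbove (v '' s)
  · rw [image_eq_range, ← ciSup_subtype_fun]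
    · rfl
    · rwa [← image_eq_range]
    · rw [Real.sSup_empty]
      exact Real.iSup_nonneg fun a => hv a
  · rw [Real.sSup_of_not_bddAbove hb, Real.iSup_of_not_bddAbove]
    rintro ⟨M, hM⟩
    refine hb ⟨M, ?_⟩
    rintro _ ⟨a, ha, rfl⟩
    simpa only [ciSup_pos ha] using hM ⟨a, rfl⟩

lemma isCompact_setOf_abs_le_lipschitzWith {E : Type*} [PseudoMetricSpace E] [CompactSpace E]
    (C : ℝ) (K : ℝ≥0) : IsCompact {g : E →ᵇ ℝ | (∀ x, |g x| ≤ C) ∧ LipschitzWith K g} := by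
  refine arzela_ascoli₂ (Icc (-C) C) isCompact_Icc _ ?_ (fun g x hg => abs_le.mp (hg.1 x))
    (LipschitzWith.uniformEquicontinuous _ K fun g => g.2.2).equicontinuous
  have hBound : IsClosed {g : E →ᵇ ℝ | ∀ x, |g x| ≤ C} := by
    rw [ofPred_forall]
    exact isClosed_iInter fun x => isClosed_le (continuous_eval_const x).abs continuous_const
  have hLip : IsClosed {g : E →ᵇ ℝ | LipschitzWith K g} :=
    (isClosed_setOfPred_lipschitzWith (α := E) (β := ℝ) K).preimage continuous_coe
  exact hBound.inter hLip

lemma setOf_abs_le_lipschitzWith_eq_image {E : Type*} [PseudoMetricSpace E] [CompactSpace E]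
    (C : ℝ) (K : ℝ≥0) : {f : E → ℝ | (∀ x, |f x| ≤ C) ∧ LipschitzWith K f} =
      (⇑) '' {g : E →ᵇ ℝ | (∀ x, |g x| ≤ C) ∧ LipschitzWith K g} := by
  ext f
  refine ⟨fun hf => ⟨mkOfCompact ⟨f, hf.2.continuous⟩, hf, rfl⟩, ?_⟩
  rintro ⟨g, hg, rfl⟩
  exact hg

namespace MeasureTheory

noncomputable def tvDist {S : Type*} [MeasurableSpace S] (P Q : Measure S) : ℝ :=
  ⨆ f ∈ {f : S → ℝ | Measurable f ∧ ∀ x, |f x| ≤ 1}, |∫ x, f x ∂P - ∫ x, f x ∂Q|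

noncomputable def blDist {E : Type*} [PseudoEMetricSpace E] [MeasurableSpace E]
    (μ ν : Measure E) : ℝ :=
  ⨆ f ∈ {f : E → ℝ | (∀ x, |f x| ≤ 1) ∧ LipschitzWith 1 f}, |∫ x, f x ∂μ - ∫ x, f x ∂ν|

lemma abs_integral_sub_le_two {Ω : Type*} [MeasurableSpace Ω] (P Q : Measure Ω)
    [IsProbabilityMeasure P] [IsProbabilityMeasure Q] {f : Ω → ℝ} (hf : ∀ x, |f x| ≤ 1) :
    |∫ x, f x ∂P - ∫ x, f x ∂Q| ≤ 2 := by
  have hP : |∫ x, f x ∂P| ≤ 1 := by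
    simpa using norm_integral_le_of_norm_le_const (μ := P) (C := 1) (f := f)
      (Eventually.of_forall fun x => by simpa using hf x)
  have hQ : |∫ x, f x ∂Q| ≤ 1 := by
    simpa using norm_integral_le_of_norm_le_const (μ := Q) (C := 1) (f := f)
      (Eventually.of_forall fun x => by simpa using hf x)
  linarith [abs_sub (∫ x, f x ∂P) (∫ x, f x ∂Q)]

lemma lipschitzWith_integral_boundedContinuousFunction {X : Type*} [TopologicalSpace X]
    [MeasurableSpace X] [OpensMeasurableSpace X] (μ : Measure X) [IsProbabilityMeasure μ] :
    LipschitzWith 1 fun g : X →ᵇ ℝ => ∫ x, g x ∂μ := by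
  refine LipschitzWith.of_dist_le_mul fun g h => ?_
  rw [NNReal.coe_one, one_mul, Real.dist_eq, ← integral_sub (g.integrable μ) (h.integrable μ)]
  simpa [dist_eq_norm] using (g - h).norm_integral_le_norm μ

lemma continuous_abs_integral_sub {X : Type*} [TopologicalSpace X] [MeasurableSpace X]
    [OpensMeasurableSpace X] :
    Continuous fun q : (ProbabilityMeasure X × ProbabilityMeasure X) × (X →ᵇ ℝ) =>
      |∫ x, q.2 x ∂(q.1.1 : Measure X) - ∫ x, q.2 x ∂(q.1.2 : Measure X)| := by
  refine continuous_abs.comp (continuous_prod_of_continuous_lipschitzWith' _ (1 + 1) (fun p => ?_)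
    fun g => ?_)
  · exact (lipschitzWith_integral_boundedContinuousFunction (p.1 : Measure X)).sub
      (lipschitzWith_integral_boundedContinuousFunction (p.2 : Measure X))
  · exact ((ProbabilityMeasure.continuous_integral_boundedContinuousFunction g).comp
      continuous_fst).sub
      ((ProbabilityMeasure.continuous_integral_boundedContinuousFunction g).comp continuous_snd)

lemma blDist_self {E : Type*} [PseudoEMetricSpace E] [MeasurableSpace E] (μ : Measure E) :
    blDist μ μ = 0 := by
  simp [blDist]

lemma continuous_blDist {E : Type*} [PseudoMetricSpace E] [CompactSpace E] [MeasurableSpace E]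
    [OpensMeasurableSpace E] :
    Continuous fun p : ProbabilityMeasure E × ProbabilityMeasure E =>
      blDist (p.1 : Measure E) p.2 := by
  have hsSup : (fun p : ProbabilityMeasure E × ProbabilityMeasure E =>
      blDist (p.1 : Measure E) p.2) = fun p => sSup ((fun g : E →ᵇ ℝ =>
        |∫ x, g x ∂(p.1 : Measure E) - ∫ x, g x ∂(p.2 : Measure E)|) ''
          {g : E →ᵇ ℝ | (∀ x, |g x| ≤ 1) ∧ LipschitzWith 1 g}) := by
    funext p
    rw [blDist, Real.biSup_eq_sSup_image fun _ => abs_nonneg _,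
      setOf_abs_le_lipschitzWith_eq_image, image_image]
  rw [hsSup]
  exact (isCompact_setOf_abs_le_lipschitzWith 1 1).continuous_sSup continuous_abs_integral_sub

lemma abs_integral_sub_le_mul_tvDist {S : Type*} [MeasurableSpace S] (P Q : Measure S)
    [IsProbabilityMeasure P] [IsProbabilityMeasure Q] {f : S → ℝ} (hf : Measurable f)
    {c : ℝ} (hc : 0 < c) (hfc : ∀ x, |f x| ≤ c) :
    |∫ x, f x ∂P - ∫ x, f x ∂Q| ≤ c * tvDist P Q := by
  have hmem : (fun x => c⁻¹ * f x) ∈ {f : S → ℝ | Measurable f ∧ ∀ x, |f x| ≤ 1} := by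
    refine ⟨hf.const_mul _, fun x => ?_⟩
    rw [abs_mul, abs_inv, abs_of_pos hc, inv_mul_le_one₀ hc]
    exact hfc x
  have hbdd : BddAbove ((fun f : S → ℝ => |∫ x, f x ∂P - ∫ x, f x ∂Q|) ''
      {f : S → ℝ | Measurable f ∧ ∀ x, |f x| ≤ 1}) := by
    refine ⟨2, ?_⟩
    rintro _ ⟨g, hg, rfl⟩
    exact abs_integral_sub_le_two P Q hg.2
  have hle := le_csSup hbdd (mem_image_of_mem _ hmem)
  rw [integral_const_mul, integral_const_mul, ← mul_sub, abs_mul, abs_inv, abs_of_pos hc,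
    inv_mul_le_iff₀ hc] at hle
  rwa [tvDist, Real.biSup_eq_sSup_image fun _ => abs_nonneg _]

lemma tendsto_integral_sub_of_tendsto_tvDist {S ι : Type*} [TopologicalSpace S] [MeasurableSpace S]
    [OpensMeasurableSpace S] {l : Filter ι} {P Q : ι → Measure S}
    [∀ i, IsProbabilityMeasure (P i)] [∀ i, IsProbabilityMeasure (Q i)]
    (h : Tendsto (fun i => tvDist (P i) (Q i)) l (𝓝 0)) (g : S →ᵇ ℝ) :
    Tendsto (fun i => ∫ x, g x ∂P i - ∫ x, g x ∂Q i) l (𝓝 0) := by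
  refine squeeze_zero_norm (fun i => abs_integral_sub_le_mul_tvDist (P i) (Q i)
    g.continuous.measurable (by positivity : 0 < ‖g‖ + 1) fun x => ?_) ?_
  · rw [← Real.norm_eq_abs]
    linarith [g.norm_coe_le_norm x]
  · simpa using h.const_mul (‖g‖ + 1)

lemma ProbabilityMeasure.eq_of_tendsto_of_tendsto_tvDist {S ι : Type*} [TopologicalSpace S]
    [MeasurableSpace S] [OpensMeasurableSpace S] [T2Space (ProbabilityMeasure S)]
    {l : Filter ι} [l.NeBot] {P Q : ι → ProbabilityMeasure S} {p q : ProbabilityMeasure S}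
    (hP : Tendsto P l (𝓝 p)) (hQ : Tendsto Q l (𝓝 q))
    (h : Tendsto (fun i => tvDist (P i : Measure S) (Q i)) l (𝓝 0)) : p = q := by
  refine tendsto_nhds_unique ?_ hQ
  rw [ProbabilityMeasure.tendsto_iff_forall_integral_tendsto] at hP ⊢
  intro g
  simpa using (hP g).sub (tendsto_integral_sub_of_tendsto_tvDist h g)

end MeasureTheory

theorem stmt12_general (E S : Type*)
    [MetricSpace E] [CompactSpace E] [MeasurableSpace E] [BorelSpace E]
    [MetricSpace S] [MeasurableSpace S] [BorelSpace S]
    (Φ : ProbabilityMeasure E → ProbabilityMeasure S)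
    (hΦcont : Continuous Φ) (hΦinj : Function.Injective Φ)
    (μ ν : ℕ → ProbabilityMeasure E)
    (htv : Tendsto (fun n =>
        ⨆ f ∈ {f : S → ℝ | Measurable f ∧ ∀ x, |f x| ≤ 1},
          |∫ x, f x ∂(Φ (μ n) : Measure S) - ∫ x, f x ∂(Φ (ν n) : Measure S)|)
      atTop (nhds 0)) :
    Tendsto (fun n =>
        ⨆ f ∈ {f : E → ℝ | (∀ x, |f x| ≤ 1) ∧ LipschitzWith 1 f},
          |∫ x, f x ∂(μ n : Measure E) - ∫ x, f x ∂(ν n : Measure E)|)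
      atTop (nhds 0) := by
  change Tendsto (fun n => tvDist (Φ (μ n) : Measure S) (Φ (ν n))) atTop (𝓝 0) at htv
  change Tendsto (fun n => blDist (μ n : Measure E) (ν n)) atTop (𝓝 0)
  refine tendsto_of_subseq_tendsto fun ns hns => ?_
  obtain ⟨⟨a, b⟩, φ, hφ, hlim⟩ := CompactSpace.tendsto_subseq fun n => (μ (ns n), ν (ns n))
  have hab : a = b := hΦinj <| ProbabilityMeasure.eq_of_tendsto_of_tendsto_tvDist
    (P := fun n => Φ (μ (ns (φ n)))) (Q := fun n => Φ (ν (ns (φ n))))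
    ((hΦcont.tendsto a).comp hlim.fst_nhds)
    ((hΦcont.tendsto b).comp hlim.snd_nhds)
    (htv.comp (hns.comp hφ.tendsto_atTop))
  refine ⟨φ, ?_⟩
  subst hab
  have hbl := (continuous_blDist.tendsto (a, a)).comp hlim
  rwa [blDist_self] at hbl

/-- **abstract form of Proposition 3.5.** Let `E` be a compact Polish
space, `S` a Polish space, and `Φ` a weakly continuous injective map from probability
measures on `E` to probability measures on `S`. Then `‖Φ(μₙ) - Φ(νₙ)‖_TV → 0` implies
`‖μₙ - νₙ‖_BL → 0`. -/
theorem stmt12 (E S : Type*)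
    [MetricSpace E] [CompactSpace E] [TopologicalSpace.SeparableSpace E]
    [CompleteSpace E] [MeasurableSpace E] [BorelSpace E]
    [MetricSpace S] [TopologicalSpace.SeparableSpace S] [CompleteSpace S]
    [MeasurableSpace S] [BorelSpace S]
    (Φ : ProbabilityMeasure E → ProbabilityMeasure S)
    (hΦcont : Continuous Φ) (hΦinj : Function.Injective Φ)
    (μ ν : ℕ → ProbabilityMeasure E)
    (htv : Tendsto (fun n =>
        ⨆ f ∈ {f : S → ℝ | Measurable f ∧ ∀ x, |f x| ≤ 1},
          |∫ x, f x ∂(Φ (μ n) : Measure S) - ∫ x, f x ∂(Φ (ν n) : Measure S)|)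
      atTop (nhds 0)) :
    Tendsto (fun n =>
        ⨆ f ∈ {f : E → ℝ | (∀ x, |f x| ≤ 1) ∧ LipschitzWith 1 f},
          |∫ x, f x ∂(μ n : Measure E) - ∫ x, f x ∂(ν n : Measure E)|)
      atTop (nhds 0) :=
  stmt12_general E S Φ hΦcont hΦinj μ ν htv
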